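/- Let (T_n) be positive linear operators on C[a,b] satisfying Σ_n ‖T_n(1)‖ p_n t^{n-1} < ∞ for t ∈ (0,1) for a power series method p. Suppose (i) lim_{t→1⁻} ‖(1/p(t)) Σ_n p_n t^{n-1} T_n(e_0) − e_0‖ = 0 and (ii) lim_{t→1⁻} ω₁(f; γ(t)) = 0 where γ(t) = (‖(1/p(t)) Σ_n p_n t^{n-1} T_n(φ_·)‖)^{1/2} with φ_x(z) = (z−x)². Then for every f ∈ C[a,b], lim_{t→1⁻} ‖(1/p(t)) Σ_n p_n t^{n-1} T_n(f) − f‖ = 0. -/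

import Mathlib

/-!
For fixed `t` and `x`, `g ↦ (1/p(t)) Σₙ pₙ tⁿ Tₙ g (x)` is a positive linear functional `Λ`.
Since `|f z - f x| ≤ ω(f, δ) (1 + (z - x)² / δ²)`, positivity gives the Shisha–Mond estimate
`|Λ f - f(x) Λ e₀| ≤ ω(f, δ) (Λ e₀ + Λ φₓ / δ²)`. Taking `δ = γ(t)`, so that `Λ φₓ ≤ δ²`, and
writing `E(t)` for the sup-distance of the means of `e₀` from `e₀`, one gets
`sup_x |Λ f - f(x)| ≤ ‖f‖ E(t) + ω(f, γ(t)) (E(t) + 2)`, which tends to `0` by (i) and (ii).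
-/

open Filter Set Topology

/-- The constant test function `e₀ = 1` on `[a, b]`. -/
def e₀ (a b : ℝ) : C(Set.Icc a b, ℝ) := ContinuousMap.const _ 1

/-- The test function `φₓ(z) = (z - x)²` on `[a, b]`. -/
def φ (a b : ℝ) (x : Set.Icc a b) : C(Set.Icc a b, ℝ) :=
  ⟨fun z => ((z : ℝ) - (x : ℝ)) ^ 2, by fun_prop⟩

section Modulus

variable {a b : ℝ} (f : C(Icc a b, ℝ))

noncomputable def modulusOfContinuity (s : ℝ) : ℝ :=
  sSup {y : ℝ | ∃ u v : Icc a b, |(v : ℝ) - (u : ℝ)| ≤ s ∧ y = |f v - f u|}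

theorem modulusOfContinuity_nonneg (s : ℝ) : 0 ≤ modulusOfContinuity f s :=
  Real.sSup_nonneg <| by rintro _ ⟨u, v, -, rfl⟩; exact abs_nonneg _

theorem abs_sub_le_modulusOfContinuity {s : ℝ} {u v : Icc a b} (h : |(v : ℝ) - u| ≤ s) :
    |f v - f u| ≤ modulusOfContinuity f s := by
  refine le_csSup ⟨2 * ‖f‖, ?_⟩ ⟨u, v, h, rfl⟩
  rintro _ ⟨u, v, -, rfl⟩
  have hu := f.norm_coe_le_norm u
  have hv := f.norm_coe_le_norm v
  rw [Real.norm_eq_abs] at hu hv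
  linarith [abs_sub (f v) (f u)]

theorem abs_sub_le_nat_mul_modulusOfContinuity {δ : ℝ} (hδ : 0 ≤ δ) (n : ℕ) {u v : Icc a b}
    (huv : (u : ℝ) ≤ v) (h : (v : ℝ) - u ≤ n * δ) :
    |f v - f u| ≤ n * modulusOfContinuity f δ := by
  induction n generalizing v with
  | zero =>
    obtain rfl : v = u := Subtype.ext (by push_cast at h; linarith)
    simp
  | succ n ih =>
    let w : Icc a b := ⟨max u (v - δ), le_trans u.2.1 (le_max_left _ _),
      (max_le huv (by linarith)).trans v.2.2⟩
    have hwv : |(v : ℝ) - w| ≤ δ := by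
      rw [abs_of_nonneg (sub_nonneg.2 (max_le huv (by linarith)))]
      linarith [le_max_right (u : ℝ) (v - δ)]
    have hwu : (w : ℝ) - u ≤ n * δ := by
      rcases max_cases (u : ℝ) (v - δ) with ⟨hw, -⟩ | ⟨hw, -⟩ <;>
        simp only [w, hw] <;> push_cast at h <;> nlinarith
    calc |f v - f u| ≤ |f v - f w| + |f w - f u| := abs_sub_le _ _ _
      _ ≤ modulusOfContinuity f δ + n * modulusOfContinuity f δ :=
        add_le_add (abs_sub_le_modulusOfContinuity f hwv) (ih (le_max_left _ _) hwu)
      _ = (n + 1 : ℕ) * modulusOfContinuity f δ := by push_cast; ring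

theorem abs_sub_le_one_add_div_mul_modulusOfContinuity {δ : ℝ} (hδ : 0 < δ) (u v : Icc a b) :
    |f v - f u| ≤ (1 + |(v : ℝ) - u| / δ) * modulusOfContinuity f δ := by
  wlog huv : (u : ℝ) ≤ v generalizing u v
  · simpa only [abs_sub_comm] using this v u (by linarith)
  set s := |(v : ℝ) - u| / δ
  have hs : (v : ℝ) - u ≤ ⌈s⌉₊ * δ := by
    rw [← div_le_iff₀ hδ, ← abs_of_nonneg (sub_nonneg.2 huv)]
    exact Nat.le_ceil s
  have hceil : (⌈s⌉₊ : ℝ) ≤ 1 + s := by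
    linarith [Nat.ceil_lt_add_one (show 0 ≤ s by positivity)]
  exact (abs_sub_le_nat_mul_modulusOfContinuity f hδ.le _ huv hs).trans
    (mul_le_mul_of_nonneg_right hceil (modulusOfContinuity_nonneg f δ))

theorem abs_sub_le_one_add_sq_div_sq_mul_modulusOfContinuity {δ : ℝ} (hδ : 0 < δ)
    (u v : Icc a b) :
    |f v - f u| ≤ (1 + ((v : ℝ) - u) ^ 2 / δ ^ 2) * modulusOfContinuity f δ := by
  have hω := modulusOfContinuity_nonneg f δ
  rcases le_or_gt |(v : ℝ) - u| δ with hclose | hfar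
  · refine (abs_sub_le_modulusOfContinuity f hclose).trans (le_mul_of_one_le_left hω ?_)
    linarith [show 0 ≤ ((v : ℝ) - u) ^ 2 / δ ^ 2 by positivity]
  · refine (abs_sub_le_one_add_div_mul_modulusOfContinuity f hδ u v).trans
      (mul_le_mul_of_nonneg_right ?_ hω)
    have h1 : 1 ≤ |(v : ℝ) - u| / δ := (one_le_div hδ).2 hfar.le
    rw [← sq_abs, ← div_pow]
    nlinarith

theorem tendsto_modulusOfContinuity_nhdsGT_zero :
    Tendsto (modulusOfContinuity f) (𝓝[>] 0) (𝓝 0) := by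
  rw [Metric.tendsto_nhdsWithin_nhds]
  intro ε hε
  obtain ⟨δ, hδ, hf⟩ := Metric.uniformContinuous_iff.1
    (CompactSpace.uniformContinuous_of_continuous f.continuous) (ε / 2) (half_pos hε)
  refine ⟨δ, hδ, fun s _ hsδ => ?_⟩
  rw [Real.dist_eq, sub_zero] at hsδ ⊢
  rw [abs_of_nonneg (modulusOfContinuity_nonneg f s)]
  have : modulusOfContinuity f s ≤ ε / 2 := by
    refine Real.sSup_le ?_ (by positivity)
    rintro _ ⟨u, v, huv, rfl⟩
    refine (hf (?_ : dist v u < δ)).le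
    rw [Subtype.dist_eq, Real.dist_eq]
    linarith [le_abs_self s]
  linarith

end Modulus

section PositiveFunctional

variable {X : Type*} [TopologicalSpace X] (Λ : C(X, ℝ) →ₚ[ℝ] ℝ)

theorem PositiveLinearMap.abs_apply_le_of_abs_le {g h : C(X, ℝ)} (hgh : ∀ z, |g z| ≤ h z) :
    |Λ g| ≤ Λ h := by
  rw [abs_le, ← map_neg]
  exact ⟨OrderHomClass.mono Λ fun z => (abs_le.1 (hgh z)).1,
    OrderHomClass.mono Λ fun z => (abs_le.1 (hgh z)).2⟩

theorem PositiveLinearMap.abs_apply_le_norm_mul_apply_one [CompactSpace X] (g : C(X, ℝ)) :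
    |Λ g| ≤ ‖g‖ * Λ 1 := by
  rw [← smul_eq_mul, ← map_smul]
  refine Λ.abs_apply_le_of_abs_le fun z => ?_
  simpa using g.norm_coe_le_norm z

end PositiveFunctional

section ShishaMond

variable {a b : ℝ}

theorem e₀_eq_one : e₀ a b = 1 := rfl

@[simp]
theorem φ_apply (x z : Icc a b) : φ a b x z = ((z : ℝ) - x) ^ 2 := rfl

theorem φ_nonneg (x : Icc a b) : 0 ≤ φ a b x := fun _ => sq_nonneg _

theorem φ_le_sq_smul_e₀ (x : Icc a b) : φ a b x ≤ (b - a) ^ 2 • e₀ a b := by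
  refine ContinuousMap.le_def.2 fun z => ?_
  simp only [φ_apply, e₀_eq_one, ContinuousMap.smul_apply, ContinuousMap.one_apply, smul_eq_mul,
    mul_one]
  exact sq_le_sq' (by linarith [x.2.2, z.2.1]) (by linarith [x.2.1, z.2.2])

variable (Λ : C(Icc a b, ℝ) →ₚ[ℝ] ℝ) (f : C(Icc a b, ℝ)) (x : Icc a b)

theorem abs_apply_sub_mul_le {δ : ℝ} (hδ : 0 < δ) :
    |Λ f - f x * Λ (e₀ a b)| ≤
      modulusOfContinuity f δ * (Λ (e₀ a b) + Λ (φ a b x) / δ ^ 2) := by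
  have hpt : ∀ z, |(f - f x • e₀ a b) z| ≤
      (modulusOfContinuity f δ • (e₀ a b + (δ ^ 2)⁻¹ • φ a b x)) z := fun z =>
    calc |(f - f x • e₀ a b) z| = |f z - f x| := by simp [e₀_eq_one]
      _ ≤ _ := abs_sub_le_one_add_sq_div_sq_mul_modulusOfContinuity f hδ x z
      _ = _ := by simp [e₀_eq_one]; ring
  simpa [div_eq_inv_mul, mul_add] using Λ.abs_apply_le_of_abs_le hpt

theorem abs_apply_sub_mul_le_of_le_sq {γ : ℝ} (hγ : 0 ≤ γ) (h : Λ (φ a b x) ≤ γ ^ 2) :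
    |Λ f - f x * Λ (e₀ a b)| ≤ modulusOfContinuity f γ * (Λ (e₀ a b) + 1) := by
  have he₀ : 0 ≤ Λ (e₀ a b) := Λ.map_nonneg zero_le_one
  rcases hγ.eq_or_lt with rfl | hγ
  · -- `Λ φₓ = 0`, so the estimate for `δ > 0` degenerates to `ω(δ) Λ e₀`, which tends to `0`.
    have hφ : Λ (φ a b x) = 0 :=
      le_antisymm (by simpa using h) (Λ.map_nonneg (φ_nonneg x))
    have hlim := (tendsto_modulusOfContinuity_nhdsGT_zero f).mul_const (Λ (e₀ a b))
    rw [zero_mul] at hlim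
    refine (ge_of_tendsto hlim ?_).trans
      (mul_nonneg (modulusOfContinuity_nonneg f 0) (by linarith))
    filter_upwards [self_mem_nhdsWithin] with δ hδ
    simpa [hφ] using abs_apply_sub_mul_le Λ f x hδ
  · refine (abs_apply_sub_mul_le Λ f x hγ).trans
      (mul_le_mul_of_nonneg_left ?_ (modulusOfContinuity_nonneg f γ))
    gcongr
    exact (div_le_one (by positivity)).2 h

end ShishaMond

theorem iSup_abs_apply_sub_le {a b : ℝ} (Λ : Icc a b → C(Icc a b, ℝ) →ₚ[ℝ] ℝ)
    (hΛ : BddAbove (range fun x => Λ x (e₀ a b))) (f : C(Icc a b, ℝ)) :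
    ⨆ x, |Λ x f - f x| ≤
      ‖f‖ * (⨆ x, |Λ x (e₀ a b) - e₀ a b x|) +
        modulusOfContinuity f √(⨆ x, Λ x (φ a b x)) * ((⨆ x, |Λ x (e₀ a b) - e₀ a b x|) + 2) := by
  set E := ⨆ x, |Λ x (e₀ a b) - e₀ a b x|
  set G := ⨆ x, Λ x (φ a b x)
  obtain ⟨M, hM⟩ := hΛ
  have he₀ : ∀ x, 0 ≤ Λ x (e₀ a b) := fun x => (Λ x).map_nonneg zero_le_one
  have hE : ∀ x, |Λ x (e₀ a b) - 1| ≤ E := by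
    refine le_ciSup (f := fun x => |Λ x (e₀ a b) - e₀ a b x|) ⟨M + 1, ?_⟩
    rintro _ ⟨x, rfl⟩
    have hle := hM ⟨x, rfl⟩
    have hge := he₀ x
    simp only [e₀_eq_one, ContinuousMap.one_apply, abs_le] at hle hge ⊢
    constructor <;> linarith
  have hG : ∀ x, Λ x (φ a b x) ≤ √G ^ 2 := by
    rw [Real.sq_sqrt (Real.iSup_nonneg fun x => (Λ x).map_nonneg (φ_nonneg x))]
    refine le_ciSup ⟨(b - a) ^ 2 * M, ?_⟩
    rintro _ ⟨x, rfl⟩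
    calc Λ x (φ a b x) ≤ Λ x ((b - a) ^ 2 • e₀ a b) := OrderHomClass.mono _ (φ_le_sq_smul_e₀ x)
      _ ≤ (b - a) ^ 2 * M := by
        rw [map_smul, smul_eq_mul]
        exact mul_le_mul_of_nonneg_left (hM ⟨x, rfl⟩) (sq_nonneg _)
  have hω := modulusOfContinuity_nonneg f √G
  have hE₀ : 0 ≤ E := Real.iSup_nonneg fun _ => abs_nonneg _
  refine Real.iSup_le (fun x => ?_) (by positivity)
  have hfx : |f x| ≤ ‖f‖ := f.norm_coe_le_norm x
  have hΛe₀ : Λ x (e₀ a b) ≤ E + 1 := by linarith [(abs_le.1 (hE x)).2]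
  calc |Λ x f - f x| ≤ |Λ x f - f x * Λ x (e₀ a b)| + |f x| * |Λ x (e₀ a b) - 1| := by
        rw [← abs_mul, show Λ x f - f x =
          (Λ x f - f x * Λ x (e₀ a b)) + f x * (Λ x (e₀ a b) - 1) by ring]
        exact abs_add_le _ _
    _ ≤ modulusOfContinuity f √G * (Λ x (e₀ a b) + 1) + ‖f‖ * E :=
        add_le_add (abs_apply_sub_mul_le_of_le_sq _ f x (Real.sqrt_nonneg G) (hG x))
          (mul_le_mul hfx (hE x) (abs_nonneg _) (norm_nonneg f))
    _ ≤ ‖f‖ * E + modulusOfContinuity f √G * (E + 2) := by nlinarith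

section PowerSeriesMean

variable {a b : ℝ} {T : ℕ → C(Icc a b, ℝ) →ₗ[ℝ] C(Icc a b, ℝ)} {p : ℕ → ℝ} {t : ℝ}

theorem summable_mul_apply (hT_pos : ∀ n, ∀ f : C(Icc a b, ℝ), (∀ x, 0 ≤ f x) → ∀ x, 0 ≤ T n f x)
    (hp_nonneg : ∀ n, 0 ≤ p n) (ht : 0 ≤ t)
    (hsum : Summable fun n => ‖T n (e₀ a b)‖ * p n * t ^ n) (g : C(Icc a b, ℝ)) (x : Icc a b) :
    Summable fun n => p n * t ^ n * T n g x := by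
  refine .of_norm_bounded (hsum.mul_left ‖g‖) fun n => ?_
  let Λ : C(Icc a b, ℝ) →ₚ[ℝ] ℝ :=
    .mk₀ ((ContinuousMap.evalCLM ℝ x).toLinearMap ∘ₗ T n) fun g hg => hT_pos n g hg x
  have hTg : |T n g x| ≤ ‖g‖ * ‖T n (e₀ a b)‖ :=
    (Λ.abs_apply_le_norm_mul_apply_one g).trans <| mul_le_mul_of_nonneg_left
      ((le_abs_self _).trans ((T n (e₀ a b)).norm_coe_le_norm x)) (norm_nonneg g)
  rw [Real.norm_eq_abs, abs_mul, abs_of_nonneg (mul_nonneg (hp_nonneg n) (pow_nonneg ht n))]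
  calc p n * t ^ n * |T n g x| ≤ p n * t ^ n * (‖g‖ * ‖T n (e₀ a b)‖) :=
        mul_le_mul_of_nonneg_left hTg (mul_nonneg (hp_nonneg n) (pow_nonneg ht n))
    _ = ‖g‖ * (‖T n (e₀ a b)‖ * p n * t ^ n) := by ring

noncomputable def powerSeriesMean
    (hT_pos : ∀ n, ∀ f : C(Icc a b, ℝ), (∀ x, 0 ≤ f x) → ∀ x, 0 ≤ T n f x)
    (hp_nonneg : ∀ n, 0 ≤ p n) (ht : 0 ≤ t)
    (hsum : Summable fun n => ‖T n (e₀ a b)‖ * p n * t ^ n) (x : Icc a b) :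
    C(Icc a b, ℝ) →ₚ[ℝ] ℝ :=
  have hg := summable_mul_apply hT_pos hp_nonneg ht hsum
  have hpt n : 0 ≤ p n * t ^ n := mul_nonneg (hp_nonneg n) (pow_nonneg ht n)
  .mk₀
    { toFun g := (∑' n, p n * t ^ n * T n g x) / ∑' n, p n * t ^ n
      map_add' g h := by
        simp only [map_add, ContinuousMap.add_apply, mul_add]
        rw [(hg g x).tsum_add (hg h x), add_div]
      map_smul' c g := by
        simp only [map_smul, ContinuousMap.smul_apply, smul_eq_mul, RingHom.id_apply,
          mul_left_comm _ c, tsum_mul_left, mul_div_assoc] }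
    fun g hg => div_nonneg (tsum_nonneg fun n => mul_nonneg (hpt n) (hT_pos n g hg x))
      (tsum_nonneg hpt)

theorem bddAbove_range_powerSeriesMean_e₀
    (hT_pos : ∀ n, ∀ f : C(Icc a b, ℝ), (∀ x, 0 ≤ f x) → ∀ x, 0 ≤ T n f x)
    (hp_nonneg : ∀ n, 0 ≤ p n) (ht : 0 ≤ t)
    (hsum : Summable fun n => ‖T n (e₀ a b)‖ * p n * t ^ n) :
    BddAbove (range fun x => powerSeriesMean hT_pos hp_nonneg ht hsum x (e₀ a b)) := by
  have hpt n : 0 ≤ p n * t ^ n := mul_nonneg (hp_nonneg n) (pow_nonneg ht n)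
  refine ⟨(∑' n, ‖T n (e₀ a b)‖ * p n * t ^ n) / ∑' n, p n * t ^ n, ?_⟩
  rintro _ ⟨x, rfl⟩
  refine div_le_div_of_nonneg_right ((summable_mul_apply hT_pos hp_nonneg ht hsum _ x).tsum_le_tsum
    (fun n => ?_) hsum) (tsum_nonneg hpt)
  calc p n * t ^ n * T n (e₀ a b) x ≤ p n * t ^ n * ‖T n (e₀ a b)‖ :=
        mul_le_mul_of_nonneg_left ((le_abs_self _).trans ((T n (e₀ a b)).norm_coe_le_norm x))
          (hpt n)
    _ = ‖T n (e₀ a b)‖ * p n * t ^ n := by ring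

end PowerSeriesMean

theorem korovkin_rate_power_series_general (a b : ℝ)
    (T : ℕ → C(Set.Icc a b, ℝ) →ₗ[ℝ] C(Set.Icc a b, ℝ))
    (hT_pos : ∀ n, ∀ f : C(Set.Icc a b, ℝ), (∀ x, 0 ≤ f x) → ∀ x, 0 ≤ T n f x)
    (p : ℕ → ℝ) (hp_nonneg : ∀ n, 0 ≤ p n)
    (hT_bdd : ∀ t ∈ Set.Ioo (0 : ℝ) 1, Summable fun n => ‖T n (e₀ a b)‖ * p n * t ^ n)
    (f : C(Set.Icc a b, ℝ)) (ω : ℝ → ℝ)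
    (hω : ∀ s : ℝ, ω s =
      sSup {y : ℝ | ∃ u v : Set.Icc a b, |(v : ℝ) - (u : ℝ)| ≤ s ∧ y = |f v - f u|})
    (γ : ℝ → ℝ)
    (hγ : ∀ t : ℝ, γ t = Real.sqrt
      (⨆ x : Set.Icc a b, (∑' n, p n * t ^ n * T n (φ a b x) x) / ∑' n, p n * t ^ n))
    (h₁ : Tendsto (fun t : ℝ =>
        ⨆ x : Set.Icc a b,
          |(∑' n, p n * t ^ n * T n (e₀ a b) x) / (∑' n, p n * t ^ n) - e₀ a b x|)
      (𝓝[<] 1) (nhds 0))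
    (h₂ : Tendsto (fun t : ℝ => ω (γ t)) (𝓝[<] 1) (nhds 0)) :
    Tendsto (fun t : ℝ =>
        ⨆ x : Set.Icc a b,
          |(∑' n, p n * t ^ n * T n f x) / (∑' n, p n * t ^ n) - f x|)
      (𝓝[<] 1) (nhds 0) := by
  obtain rfl : ω = modulusOfContinuity f := funext hω
  obtain rfl : γ = _ := funext hγ
  have hbound := (h₁.const_mul ‖f‖).add (h₂.mul (h₁.add_const 2))
  rw [mul_zero, zero_mul, add_zero] at hbound
  refine squeeze_zero' (.of_forall fun t => Real.iSup_nonneg fun x => abs_nonneg _) ?_ hbound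
  filter_upwards [Ioo_mem_nhdsLT zero_lt_one] with t ht
  exact iSup_abs_apply_sub_le (powerSeriesMean hT_pos hp_nonneg ht.1.le (hT_bdd t ht))
    (bddAbove_range_powerSeriesMean_e₀ hT_pos hp_nonneg ht.1.le (hT_bdd t ht)) f

/-- Rate-of-convergence Korovkin theorem via the power series summability
method: if the P-means of `Tₙ(e₀)` converge uniformly to `e₀` and
`ω₁(f; γ(t)) → 0` where `γ(t)² = sup_x (1/p(t)) Σₙ pₙ tⁿ⁻¹ Tₙ((·-x)²)(x)`,
then the P-means of `Tₙ(f)` converge uniformly to `f` as `t → 1⁻`. -/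
theorem korovkin_rate_power_series (a b : ℝ) (hab : a ≤ b)
    (T : ℕ → C(Set.Icc a b, ℝ) →ₗ[ℝ] C(Set.Icc a b, ℝ))
    (hT_pos : ∀ n, ∀ f : C(Set.Icc a b, ℝ), (∀ x, 0 ≤ f x) → ∀ x, 0 ≤ T n f x)
    (p : ℕ → ℝ) (hp_nonneg : ∀ n, 0 ≤ p n) (hp_pos : 0 < p 0)
    (hp_radius : ∀ t : ℝ, |t| < 1 → Summable fun n => p n * t ^ n)
    (hp_div : Tendsto (fun N => ∑ i ∈ Finset.range N, p i) atTop atTop)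
    (hT_bdd : ∀ t ∈ Set.Ioo (0 : ℝ) 1, Summable fun n => ‖T n (e₀ a b)‖ * p n * t ^ n)
    (f : C(Set.Icc a b, ℝ)) (ω : ℝ → ℝ)
    (hω : ∀ s : ℝ, ω s =
      sSup {y : ℝ | ∃ u v : Set.Icc a b, |(v : ℝ) - (u : ℝ)| ≤ s ∧ y = |f v - f u|})
    (γ : ℝ → ℝ)
    (hγ : ∀ t : ℝ, γ t = Real.sqrt
      (⨆ x : Set.Icc a b, (∑' n, p n * t ^ n * T n (φ a b x) x) / ∑' n, p n * t ^ n))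
    (h₁ : Tendsto (fun t : ℝ =>
        ⨆ x : Set.Icc a b,
          |(∑' n, p n * t ^ n * T n (e₀ a b) x) / (∑' n, p n * t ^ n) - e₀ a b x|)
      (𝓝[<] 1) (nhds 0))
    (h₂ : Tendsto (fun t : ℝ => ω (γ t)) (𝓝[<] 1) (nhds 0)) :
    Tendsto (fun t : ℝ =>
        ⨆ x : Set.Icc a b,
          |(∑' n, p n * t ^ n * T n f x) / (∑' n, p n * t ^ n) - f x|)
      (𝓝[<] 1) (nhds 0) :=
  korovkin_rate_power_series_general a b T hT_pos p hp_nonneg hT_bdd f ω hω γ hγ h₁ h₂
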